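/- Let M be a nonempty finite set, A = (M → ℂ), and E ⊆ M × M an irreflexive relation which is n-regular: for each x ∈ M a bijection s_x : Fin n → {y ∈ M : (x,y) ∈ E} is given. Let λ_a : M → ℂ∖{0} be nonvanishing functions for a ∈ Fin n, and define e_a ∈ Ω¹_E by e_a(x,y) = λ_a(x) if y = s_x(a) and e_a(x,y) = 0 otherwise. Then: (i) {e_a : a ∈ Fin n} is a basis of Ω¹_E as a free left A-module; (ii) the bimodule commutation relations e_a·f = f^{(a)}·e_a hold for all f ∈ A, where f^{(a)}(x) := f(s_x(a)); (iii) d_E f = Σ_a (∂^a f)·e_a where the partial derivatives are the finite differences (∂^a f)(x) = (f(s_x(a)) − f(x))/λ_a(x); (iv) Σ_a (λ_a)^{-1}·e_a = Θ, the constant function 1 on E, so the calculus is inner with [Θ, f] = d_E f. -/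

import Mathlib

/-! Every edge `(x, y)` carries the unique label `a = s_x⁻¹ y`, and `e_a` is supported exactly on
the edges labelled `a`. Hence `(Σ_a g_a · e_a)(x, y) = g_a(x) λ_a(x)` for that label, and each
claim reduces to a pointwise identity at a single edge; innerness holds for every graph. -/

noncomputable section

namespace GraphCalculus

variable {M : Type} [Fintype M] [DecidableEq M] [Nonempty M]

/-- Left action of `A = M → ℂ` on the graph 1-forms `Ω¹_E = E → ℂ`. -/
def smulL (E : Set (M × M)) (f : M → ℂ) (ω : ↥E → ℂ) : ↥E → ℂ :=
  fun e => f (e : M × M).1 * ω e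

/-- Right action of `A = M → ℂ` on the graph 1-forms `Ω¹_E = E → ℂ`. -/
def smulR (E : Set (M × M)) (ω : ↥E → ℂ) (f : M → ℂ) : ↥E → ℂ :=
  fun e => ω e * f (e : M × M).2

/-- The graph differential `(d_E f)(x,y) = f(y) - f(x)`. -/
def dE (E : Set (M × M)) (f : M → ℂ) : ↥E → ℂ :=
  fun e => f (e : M × M).2 - f (e : M × M).1

section Frame

omit [Fintype M] [Nonempty M]

variable {E : Set (M × M)} {n : ℕ} (s : ∀ x : M, Fin n ≃ {y : M // (x, y) ∈ E})

section Labels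

omit [DecidableEq M]

def edgeLabel (p : ↥E) : Fin n :=
  (s p.1.1).symm ⟨p.1.2, p.2⟩

def labelledEdge (x : M) (a : Fin n) : ↥E :=
  ⟨(x, s x a), (s x a).2⟩

theorem edgeLabel_labelledEdge (x : M) (a : Fin n) : edgeLabel s (labelledEdge s x a) = a :=
  (s x).symm_apply_apply a

theorem labelledEdge_edgeLabel (p : ↥E) : labelledEdge s p.1.1 (edgeLabel s p) = p := by
  simp [labelledEdge, edgeLabel]

theorem snd_eq_iff_edgeLabel_eq (p : ↥E) (a : Fin n) :
    (p : M × M).2 = s p.1.1 a ↔ edgeLabel s p = a := by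
  rw [edgeLabel, Equiv.symm_apply_eq, Subtype.ext_iff]

end Labels

def IsFrame (lam : Fin n → M → ℂ) (e : Fin n → ↥E → ℂ) : Prop :=
  ∀ a p, e a p = if (p : M × M).2 = s p.1.1 a then lam a p.1.1 else 0

variable {lam : Fin n → M → ℂ} {e : Fin n → ↥E → ℂ}

theorem sum_smulL_frame_apply (he : IsFrame s lam e) (g : Fin n → M → ℂ) (p : ↥E) :
    (∑ a, smulL E (g a) (e a)) p = g (edgeLabel s p) p.1.1 * lam (edgeLabel s p) p.1.1 := by
  simp only [Finset.sum_apply, smulL, he _ p, snd_eq_iff_edgeLabel_eq, mul_ite, mul_zero,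
    Finset.sum_ite_eq, Finset.mem_univ, if_true]

theorem eq_sum_smulL_frame_iff (he : IsFrame s lam e) (g : Fin n → M → ℂ) (ω : ↥E → ℂ) :
    ω = ∑ a, smulL E (g a) (e a) ↔ ∀ x a, ω (labelledEdge s x a) = g a x * lam a x := by
  constructor
  · rintro rfl x a
    rw [sum_smulL_frame_apply s he, edgeLabel_labelledEdge]
    rfl
  · intro h
    funext p
    rw [sum_smulL_frame_apply s he, ← h, labelledEdge_edgeLabel]

theorem existsUnique_eq_sum_smulL_frame (hlam : ∀ a x, lam a x ≠ 0)
    (he : IsFrame s lam e) (ω : ↥E → ℂ) :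
    ∃! g : Fin n → M → ℂ, ω = ∑ a, smulL E (g a) (e a) := by
  refine ⟨fun a x => ω (labelledEdge s x a) / lam a x, ?_, fun g hg => ?_⟩
  · exact (eq_sum_smulL_frame_iff s he _ ω).mpr fun x a => (div_mul_cancel₀ _ (hlam a x)).symm
  · funext a x
    rw [(eq_sum_smulL_frame_iff s he g ω).mp hg, mul_div_cancel_right₀ _ (hlam a x)]

theorem smulR_frame (he : IsFrame s lam e) (a : Fin n) (f : M → ℂ) :
    smulR E (e a) f = smulL E (fun x => f (s x a)) (e a) := by
  funext p
  simp only [smulR, smulL, he a p]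
  split_ifs with h
  · rw [h, mul_comm]
  · simp

theorem dE_eq_sum_smulL_frame (hlam : ∀ a x, lam a x ≠ 0) (he : IsFrame s lam e) (f : M → ℂ) :
    dE E f = ∑ a, smulL E (fun x => (f (s x a) - f x) / lam a x) (e a) := by
  funext p
  rw [sum_smulL_frame_apply s he, div_mul_cancel₀ _ (hlam _ _),
    ← (snd_eq_iff_edgeLabel_eq s p _).mpr rfl]
  rfl

theorem sum_smulL_inv_frame (hlam : ∀ a x, lam a x ≠ 0) (he : IsFrame s lam e) :
    (∑ a, smulL E (fun x => (lam a x)⁻¹) (e a)) = fun _ => 1 := by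
  funext p
  rw [sum_smulL_frame_apply s he]
  exact inv_mul_cancel₀ (hlam _ _)

end Frame

omit [Fintype M] [DecidableEq M] [Nonempty M] in
theorem smulR_one_sub_smulL_one (E : Set (M × M)) (f : M → ℂ) :
    smulR E (fun _ => 1) f - smulL E f (fun _ => 1) = dE E f := by
  funext p
  simp [smulR, smulL, dE]

theorem regular_graph_framing
    (E : Set (M × M)) (n : ℕ)
    (s : ∀ x : M, Fin n ≃ {y : M // (x, y) ∈ E})
    (lam : Fin n → M → ℂ) (hlam : ∀ a x, lam a x ≠ 0)
    (e : Fin n → (↥E → ℂ))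
    (he : ∀ (a : Fin n) (p : ↥E),
      e a p =
        if ((p : M × M).2 = ((s (p : M × M).1 a : M))) then lam a (p : M × M).1
        else 0) :
    -- (i) free left module basis
    (∀ ω : ↥E → ℂ, ∃! f : Fin n → M → ℂ, ω = ∑ a, smulL E (f a) (e a)) ∧
    -- (ii) bimodule commutation relations
    (∀ (a : Fin n) (f : M → ℂ),
      smulR E (e a) f = smulL E (fun x => f (s x a)) (e a)) ∧
    -- (iii) finite-difference partial derivatives
    (∀ f : M → ℂ,
      dE E f = ∑ a, smulL E (fun x => (f (s x a) - f x) / lam a x) (e a)) ∧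
    -- (iv) Θ and innerness
    ((∑ a, smulL E (fun x => (lam a x)⁻¹) (e a)) = fun _ => (1 : ℂ)) ∧
    (∀ f : M → ℂ,
      smulR E (fun _ => (1 : ℂ)) f - smulL E f (fun _ => (1 : ℂ)) = dE E f) :=
  ⟨existsUnique_eq_sum_smulL_frame s hlam he, smulR_frame s he, dE_eq_sum_smulL_frame s hlam he,
    sum_smulL_inv_frame s hlam he, smulR_one_sub_smulL_one E⟩

end GraphCalculus
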